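/- Let m ≥ 2, let 0 < k_1 < ⋯ < k_m be integers with k_m − k_{m−1} ≥ 2, and let z_1, …, z_m ∈ ℂ be nonzero. Define t by t_0 = 1, t_{k_i} = z_i for 1 ≤ i ≤ m, and t_j = 0 for all other j ≥ 1, and assume 1 + Σ_{i=1}^{m} C(n,k_i)·z_i ≠ 0 for all n. Then the series Σ_{n≥1} ζ_n^a converges, where ζ_n^a = (1 + Σ_{i=1}^{m} C(n,k_i)·|z_i|)/|1 + Σ_{i=1}^{m} C(n,k_i)·z_i| − 1 (hence the associated ℂSG measure is of bounded variation). -/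

import Mathlib

open MeasureTheory Filter Finset

attribute [local instance] Classical.propDecidable

noncomputable section

/-- A relation on ℕ representing a naturally labelled past-finite causal set:
a strict partial order `r` with `r i j → i < j`. -/
def CausalRel (r : ℕ → ℕ → Prop) : Prop :=
  (∀ i, ¬ r i i) ∧ (∀ i j k, r i j → r j k → r i k) ∧ (∀ i j, r i j → i < j)

/-- Ω, the sample space of naturally labelled past-finite causal sets. -/
def Omega : Type := {r : ℕ → ℕ → Prop // CausalRel r}

/-- An `n`-node: a strict partial order on `Fin n` compatible with the labelling. -/
def IsNode {n : ℕ} (p : Fin n → Fin n → Prop) : Prop :=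
  (∀ i, ¬ p i i) ∧ (∀ i j k, p i j → p j k → p i k) ∧
    (∀ i j : Fin n, p i j → (i : ℕ) < (j : ℕ))

/-- The cylinder set of an `n`-node. -/
def Cyl {n : ℕ} (p : Fin n → Fin n → Prop) : Set Omega :=
  {r | ∀ i j : Fin n, r.1 i.1 j.1 ↔ p i j}

/-- The Boolean set algebra 𝔜 generated by the cylinder sets (and Ω itself) under
finite unions, intersections and complements. -/
inductive InAlg : Set Omega → Prop
  | basic {n : ℕ} (hn : 1 ≤ n) (p : Fin n → Fin n → Prop) (hp : IsNode p) : InAlg (Cyl p)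
  | univ : InAlg Set.univ
  | compl (s : Set Omega) : InAlg s → InAlg sᶜ
  | union (s t : Set Omega) : InAlg s → InAlg t → InAlg (s ∪ t)

/-- Finite additivity of a complex set function on the algebra 𝔜. -/
def FinitelyAdditive (μ : Set Omega → ℂ) : Prop :=
  ∀ s t : Set Omega, InAlg s → InAlg t → Disjoint s t → μ (s ∪ t) = μ s + μ t

/-- A finite partition of Ω into pairwise disjoint members of 𝔜. -/
def IsPartition (π : Finset (Set Omega)) : Prop :=
  (∀ s ∈ π, InAlg s) ∧ ((↑π : Set (Set Omega)).Pairwise Disjoint) ∧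
    ⋃₀ (↑π : Set (Set Omega)) = Set.univ

/-- Bounded variation: the sums Σᵢ |μ(αᵢ)| over finite partitions of Ω into members
of 𝔜 are uniformly bounded. -/
def BoundedVariation (μ : Set Omega → ℂ) : Prop :=
  ∃ M : ℝ, ∀ π : Finset (Set Omega), IsPartition π → ∑ s ∈ π, ‖(μ s)‖ ≤ M

/-- λ(a,b) = Σ_{k=b}^{a} C(a−b, k−b)·t_k. -/
def lam (t : ℕ → ℂ) (a b : ℕ) : ℂ :=
  ∑ k ∈ Finset.Icc b a, ((a - b).choose (k - b) : ℂ) * t k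

/-- The maximal elements of a finite subset `I` with respect to the relation `c`. -/
def maxIn {n : ℕ} (c : Fin n → Fin n → Prop) (I : Finset (Fin n)) : Finset (Fin n) :=
  I.filter fun i => ∀ j ∈ I, ¬ c i j

/-- The past of the element `m` in the node `p`. -/
def pastOf {n : ℕ} (p : Fin n → Fin n → Prop) (m : Fin n) : Finset (Fin n) :=
  Finset.univ.filter fun i => p i m

/-- The ℂSG amplitude of (the cylinder set of) an `n`-node:
∏_{m=1}^{n−1} λ(ϖ_m, μ_m)/λ(m,0). -/
def amp (t : ℕ → ℂ) {n : ℕ} (p : Fin n → Fin n → Prop) : ℂ :=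
  ∏ m ∈ Finset.univ.filter (fun m : Fin n => 1 ≤ (m : ℕ)),
    lam t (pastOf p m).card (maxIn p (pastOf p m)).card / lam t (m : ℕ) 0

/-- μ is the ℂSG measure associated to the coupling constants t: it is finitely
additive on 𝔜 and takes the prescribed values on cylinder sets. -/
def IsCSG (t : ℕ → ℂ) (μ : Set Omega → ℂ) : Prop :=
  FinitelyAdditive μ ∧
    ∀ (n : ℕ), 1 ≤ n → ∀ p : Fin n → Fin n → Prop, IsNode p → μ (Cyl p) = amp t p

/-- `I` is an order ideal (downward-closed set) of the relation `c`. -/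
def isIdeal {n : ℕ} (c : Fin n → Fin n → Prop) (I : Finset (Fin n)) : Prop :=
  ∀ j ∈ I, ∀ i, c i j → i ∈ I

/-- Q(c) := Σ_{I an order ideal of c} |λ(|I|, m(I))|. -/
def Qval (t : ℕ → ℂ) {n : ℕ} (c : Fin n → Fin n → Prop) : ℝ :=
  ∑ I ∈ Finset.univ.filter (fun I : Finset (Fin n) => isIdeal c I),
    ‖(lam t I.card (maxIn c I).card)‖

/-- ζ(c) := Q(c)/|λ(n,0)| − 1. -/
def zeta (t : ℕ → ℂ) {n : ℕ} (c : Fin n → Fin n → Prop) : ℝ :=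
  Qval t c / ‖(lam t n 0)‖ - 1

/-- ζ_n^a := (Σ_{k=0}^{n} C(n,k)·|t_k|)/|λ(n,0)| − 1. -/
def zetaA (t : ℕ → ℂ) (n : ℕ) : ℝ :=
  (∑ k ∈ Finset.range (n + 1), (n.choose k : ℝ) * ‖(t k)‖) /
    ‖(lam t n 0)‖ - 1

/-- ζ_n^c := (|t_0| + Σ_{ϖ=1}^{n} |λ(ϖ,1)|)/|λ(n,0)| − 1. -/
def zetaC (t : ℕ → ℂ) (n : ℕ) : ℝ :=
  (‖(t 0)‖ + ∑ w ∈ Finset.Icc 1 n, ‖(lam t w 1)‖) /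
    ‖(lam t n 0)‖ - 1

/-- S_n := Σ_{p an n-node} |μ(Cyl(p))|. -/
def Svar (μ : Set Omega → ℂ) (n : ℕ) : ℝ :=
  ∑ p : {p : Fin n → Fin n → Prop // IsNode p}, ‖(μ (Cyl p.1))‖

/-!
Both sums in ζ_n^a collapse to `1 + ∑ᵢ C(n, kᵢ) (·)`. The top term `C(n, k_m) z_m` has degree
`k_m` in `n` while every other term has degree at most `k_{m-1} ≤ k_m - 2`, so ζ_n^a = O(n⁻²).

For bounded variation, each member of the algebra is a finite union of level-`N` cylinders, so
the variation of a partition is at most `S_N = ∑ |amp(p)|` over `N`-nodes `p`. An `(N+1)`-node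
is an `N`-node `c` together with an order ideal `I` of `c` (the past of the new element), and the
amplitude picks up the factor `λ(|I|, |max I|)/λ(N,0)`; hence `S_{N+1} = ∑_c |amp c| (1 + ζ(c))`.
Expanding `λ(|I|, |max I|)` as a sum over `S ⊆ I \ max I` and using that `(I, S) ↦ max I ∪ S` is
injective (`I` is the down-closure of `max I ∪ S`) gives `ζ(c) ≤ ζ_N^a`, so
`S_N ≤ ∏ (1 + ζ_n^a) ≤ exp ∑ ζ_n^a`.
-/

lemma lam_zero_right (t : ℕ → ℂ) (n : ℕ) :
    lam t n 0 = ∑ j ∈ range (n + 1), (n.choose j : ℂ) * t j := by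
  simp [lam, Nat.range_succ_eq_Icc_zero]

lemma sum_range_choose_mul_of_support {R : Type*} [Semiring R] {m : ℕ} {k : Fin m → ℕ}
    (hk0 : ∀ i, k i ≠ 0) (hk : Function.Injective k) {s : ℕ → R}
    (hs : ∀ j, j ≠ 0 → (∀ i, j ≠ k i) → s j = 0) (n : ℕ) :
    ∑ j ∈ range (n + 1), (n.choose j : R) * s j = s 0 + ∑ i, (n.choose (k i) : R) * s (k i) := by
  set f : ℕ → R := fun j => (n.choose j : R) * s j
  have h0 : 0 ∉ univ.image k := by simpa using hk0
  calc ∑ j ∈ range (n + 1), f j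
      = ∑ j ∈ range (n + 1) ∪ insert 0 (univ.image k), f j := by
        refine sum_subset subset_union_left fun j _ hjn => ?_
        rw [mem_range, not_lt] at hjn
        simp [f, Nat.choose_eq_zero_of_lt (Nat.lt_of_succ_le hjn)]
    _ = ∑ j ∈ insert 0 (univ.image k), f j := by
        refine (sum_subset subset_union_right fun j _ hj => ?_).symm
        simp only [mem_insert, mem_image, mem_univ, true_and, not_or, not_exists] at hj
        simp [f, hs j hj.1 fun i h => hj.2 i h.symm]
    _ = s 0 + ∑ i, (n.choose (k i) : R) * s (k i) := by
        rw [sum_insert h0, sum_image fun i _ j _ h => hk h]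
        simp [f]

lemma div_norm_add_sub_one_le {E : Type*} [SeminormedAddCommGroup E] {a b : E} {ρ : ℝ}
    (ha : ‖a‖ ≤ ρ) (hb : 2 * ρ ≤ ‖b‖) (hb0 : 0 < ‖b‖) :
    (ρ + ‖b‖) / ‖a + b‖ - 1 ≤ 4 * ρ / ‖b‖ := by
  have hab : ‖b‖ ≤ ‖a + b‖ + ‖a‖ := by simpa using norm_sub_le (a + b) a
  have hpos : 0 < ‖a + b‖ := by linarith [norm_nonneg a]
  rw [div_sub_one hpos.ne', div_le_div_iff₀ hpos hb0]
  nlinarith [norm_nonneg a]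

lemma cast_choose_le_pow (n k K : ℕ) (hn : 1 ≤ n) (hk : k ≤ K) :
    (n.choose k : ℝ) ≤ (n : ℝ) ^ K :=
  calc (n.choose k : ℝ) ≤ (n : ℝ) ^ k := by exact_mod_cast Nat.choose_le_pow n k
    _ ≤ (n : ℝ) ^ K := pow_le_pow_right₀ (by exact_mod_cast hn) hk

lemma pow_div_le_cast_choose {n K : ℕ} (hn : 2 * K ≤ n) :
    (n : ℝ) ^ K / (2 ^ K * K.factorial) ≤ n.choose K := by
  have half_le : (n : ℝ) / 2 ≤ ((n + 1 - K : ℕ) : ℝ) := by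
    rw [div_le_iff₀ two_pos]
    exact_mod_cast (by omega : n ≤ (n + 1 - K) * 2)
  calc (n : ℝ) ^ K / (2 ^ K * K.factorial) = ((n : ℝ) / 2) ^ K / K.factorial := by
        rw [div_pow, div_div]
    _ ≤ ((n + 1 - K : ℕ) : ℝ) ^ K / K.factorial := by gcongr
    _ ≤ n.choose K := Nat.pow_le_choose K n

lemma exists_ratio_sub_one_le_div_sq {m : ℕ} {k : Fin m → ℕ} {z : Fin m → ℂ} {T : Fin m}
    {K' : ℕ} (hT : z T ≠ 0) (hk : ∀ i ≠ T, k i ≤ K') (hK' : K' + 2 ≤ k T) :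
    ∃ C : ℝ, ∀ᶠ n : ℕ in atTop,
      (1 + ∑ i, (n.choose (k i) : ℝ) * ‖z i‖) / ‖1 + ∑ i, (n.choose (k i) : ℂ) * z i‖ - 1
        ≤ C / (n : ℝ) ^ 2 := by
  set K := k T
  set Z : ℝ := 1 + ∑ i, ‖z i‖
  set c : ℝ := ‖z T‖ / (2 ^ K * K.factorial)
  have hZ : 0 ≤ Z := by positivity
  have hc : 0 < c := by have := norm_pos_iff.mpr hT; positivity
  refine ⟨4 * Z / c, ?_⟩
  filter_upwards [eventually_ge_atTop (2 * K), eventually_ge_atTop 1,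
    tendsto_natCast_atTop_atTop.eventually_ge_atTop (2 * Z / c)] with n hnK hn1 hnZ
  have hn1' : (1 : ℝ) ≤ n := by exact_mod_cast hn1
  set ρ : ℝ := 1 + ∑ i ∈ univ.erase T, (n.choose (k i) : ℝ) * ‖z i‖
  set a : ℂ := 1 + ∑ i ∈ univ.erase T, (n.choose (k i) : ℂ) * z i
  set b : ℂ := (n.choose K : ℂ) * z T
  have hnorm_b : ‖b‖ = n.choose K * ‖z T‖ := by simp [b]
  have ha : ‖a‖ ≤ ρ := by
    refine (norm_add_le _ _).trans (add_le_add (by simp) ((norm_sum_le _ _).trans ?_))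
    simp
  have hρ : ρ ≤ Z * (n : ℝ) ^ K' := by
    have hsum : ∑ i ∈ univ.erase T, (n.choose (k i) : ℝ) * ‖z i‖
        ≤ (∑ i, ‖z i‖) * (n : ℝ) ^ K' := by
      rw [sum_mul]
      calc _ ≤ ∑ i ∈ univ.erase T, ‖z i‖ * (n : ℝ) ^ K' := by
            refine sum_le_sum fun i hi => ?_
            rw [mul_comm]
            exact mul_le_mul_of_nonneg_left
              (cast_choose_le_pow n _ _ hn1 (hk i (ne_of_mem_erase hi))) (norm_nonneg _)
        _ ≤ ∑ i, ‖z i‖ * (n : ℝ) ^ K' :=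
            sum_le_sum_of_subset_of_nonneg (erase_subset _ _) fun _ _ _ => by positivity
    have : (1 : ℝ) ≤ (n : ℝ) ^ K' := one_le_pow₀ hn1'
    simp only [ρ, Z, add_mul, one_mul]
    linarith
  have hb : c * (n : ℝ) ^ K ≤ ‖b‖ := by
    calc c * (n : ℝ) ^ K = (n : ℝ) ^ K / (2 ^ K * K.factorial) * ‖z T‖ := by ring
      _ ≤ ‖b‖ := hnorm_b ▸ mul_le_mul_of_nonneg_right (pow_div_le_cast_choose hnK) (norm_nonneg _)
  have hgap : (n : ℝ) ^ K' * (n : ℝ) ^ 2 ≤ (n : ℝ) ^ K := by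
    rw [← pow_add]; exact pow_le_pow_right₀ hn1' hK'
  have hnZ' : 2 * Z ≤ c * (n : ℝ) ^ 2 := by
    rw [div_le_iff₀ hc] at hnZ
    nlinarith
  have hsplit_norm : 1 + ∑ i, (n.choose (k i) : ℝ) * ‖z i‖ = ρ + ‖b‖ := by
    rw [hnorm_b, ← sum_erase_add _ _ (mem_univ T), add_assoc]
  have hsplit : 1 + ∑ i, (n.choose (k i) : ℂ) * z i = a + b := by
    rw [← sum_erase_add _ _ (mem_univ T), add_assoc]
  have hpow : 0 < (n : ℝ) ^ K' := by positivity
  have hb0 : 0 < ‖b‖ := by nlinarith [pow_pos (by positivity : (0 : ℝ) < n) K]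
  rw [hsplit_norm, hsplit]
  refine (div_norm_add_sub_one_le ha (by nlinarith) hb0).trans ?_
  rw [div_le_div_iff₀ hb0 (by positivity)]
  have : 4 * Z / c * ‖b‖ ≥ 4 * Z * (n : ℝ) ^ K := by
    rw [div_mul_eq_mul_div, ge_iff_le, le_div_iff₀ hc]
    nlinarith
  nlinarith

abbrev Node (n : ℕ) : Type := {p : Fin n → Fin n → Prop // IsNode p}

def Node.restrict {n N : ℕ} (h : n ≤ N) (q : Node N) : Node n :=
  ⟨fun i j => q.1 (Fin.castLE h i) (Fin.castLE h j),
    fun _ => q.2.1 _, fun _ _ _ => q.2.2.1 _ _ _, fun _ _ => q.2.2.2 _ _⟩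

namespace Omega

def toNode (n : ℕ) (r : Omega) : Node n :=
  ⟨fun i j => r.1 i j, fun _ => r.2.1 _, fun _ _ _ => r.2.2.1 _ _ _, fun _ _ => r.2.2.2 _ _⟩

lemma mem_cyl_iff {n : ℕ} (p : Node n) (r : Omega) : r ∈ Cyl p.1 ↔ r.toNode n = p := by
  refine ⟨fun h => Subtype.ext (funext₂ fun i j => propext (h i j)), ?_⟩
  rintro rfl i j
  exact Iff.rfl

lemma cyl_nonempty {n : ℕ} (p : Node n) : (Cyl p.1).Nonempty := by
  refine ⟨⟨fun a b => ∃ (ha : a < n) (hb : b < n), p.1 ⟨a, ha⟩ ⟨b, hb⟩, ?_, ?_, ?_⟩, ?_⟩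
  · rintro i ⟨_, _, h⟩
    exact p.2.1 _ h
  · rintro a b c ⟨ha, _, h₁⟩ ⟨_, hc, h₂⟩
    exact ⟨ha, hc, p.2.2.1 _ _ _ h₁ h₂⟩
  · rintro a b ⟨_, _, h⟩
    exact p.2.2.2 _ _ h
  · intro i j
    exact ⟨fun ⟨_, _, h⟩ => h, fun h => ⟨i.2, j.2, h⟩⟩

end Omega

def cylUnion (n : ℕ) (T : Finset (Node n)) : Set Omega := {r | r.toNode n ∈ T}

lemma cyl_eq_cylUnion {n : ℕ} (p : Node n) : Cyl p.1 = cylUnion n {p} := by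
  ext r
  simp [cylUnion, Omega.mem_cyl_iff]

lemma cylUnion_eq_restrict {n N : ℕ} (h : n ≤ N) (T : Finset (Node n)) :
    cylUnion n T = cylUnion N (univ.filter fun q => q.restrict h ∈ T) := by
  ext r
  simp only [cylUnion, Set.mem_ofPred_eq, mem_filter, mem_univ, true_and]
  rfl

lemma InAlg.eventually_eq_cylUnion {s : Set Omega} (hs : InAlg s) :
    ∀ᶠ N in atTop, ∃ T : Finset (Node N), s = cylUnion N T := by
  induction hs with
  | @basic n _ p hp =>
    filter_upwards [eventually_ge_atTop n] with N hN
    exact ⟨_, (cyl_eq_cylUnion ⟨p, hp⟩).trans (cylUnion_eq_restrict hN _)⟩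
  | univ => exact .of_forall fun N => ⟨Finset.univ, by ext; simp [cylUnion]⟩
  | compl s _ ih =>
    filter_upwards [ih] with N ⟨T, hT⟩
    exact ⟨Tᶜ, by ext; simp [hT, cylUnion]⟩
  | union s u _ _ ihs ihu =>
    filter_upwards [ihs, ihu] with N ⟨T, hT⟩ ⟨U, hU⟩
    exact ⟨T ∪ U, by ext; simp [hT, hU, cylUnion]⟩

lemma cylUnion_empty (n : ℕ) : cylUnion n ∅ = ∅ := by
  ext; simp [cylUnion]

lemma cylUnion_insert {n : ℕ} (p : Node n) (T : Finset (Node n)) :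
    cylUnion n (insert p T) = Cyl p.1 ∪ cylUnion n T := by
  ext; simp [cylUnion, Omega.mem_cyl_iff]

lemma inAlg_empty : InAlg ∅ := by simpa using InAlg.compl _ InAlg.univ

lemma inAlg_cylUnion {n : ℕ} (hn : 1 ≤ n) (T : Finset (Node n)) : InAlg (cylUnion n T) := by
  induction T using Finset.induction with
  | empty => simpa [cylUnion_empty] using inAlg_empty
  | @insert p T _ ih =>
    rw [cylUnion_insert]
    exact InAlg.union _ _ (InAlg.basic hn p.1 p.2) ih

def sumNormAmp (t : ℕ → ℂ) (n : ℕ) : ℝ := ∑ p : Node n, ‖amp t p.1‖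

namespace IsCSG

variable {t : ℕ → ℂ} {μ : Set Omega → ℂ}

lemma apply_empty (hμ : IsCSG t μ) : μ ∅ = 0 := by
  simpa using hμ.1 ∅ ∅ inAlg_empty inAlg_empty disjoint_bot_left

lemma apply_cylUnion (hμ : IsCSG t μ) {n : ℕ} (hn : 1 ≤ n) (T : Finset (Node n)) :
    μ (cylUnion n T) = ∑ p ∈ T, amp t p.1 := by
  induction T using Finset.induction with
  | empty => simpa [cylUnion_empty] using hμ.apply_empty
  | @insert p T hp ih =>
    have hdisj : Disjoint (Cyl p.1) (cylUnion n T) :=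
      Set.disjoint_left.2 fun r hr hr' => hp (by rwa [cylUnion, Set.mem_ofPred_eq,
        (Omega.mem_cyl_iff p r).1 hr] at hr')
    rw [cylUnion_insert, hμ.1 _ _ (InAlg.basic hn p.1 p.2) (inAlg_cylUnion hn T) hdisj,
      sum_insert hp, ih, hμ.2 n hn p.1 p.2]

lemma exists_sum_norm_le_sumNormAmp (hμ : IsCSG t μ) {π : Finset (Set Omega)}
    (hπ : IsPartition π) : ∃ N, 1 ≤ N ∧ ∑ s ∈ π, ‖μ s‖ ≤ sumNormAmp t N := by
  obtain ⟨N, hN, hrep⟩ := ((eventually_ge_atTop 1).and ((eventually_all_finset π).2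
    fun s hs => (hπ.1 s hs).eventually_eq_cylUnion)).exists
  choose! T hT using hrep
  have hdisj : (π : Set (Set Omega)).PairwiseDisjoint T := by
    intro s hs u hu hsu
    refine disjoint_left.2 fun p hps hpu => ?_
    obtain ⟨r, hr⟩ := Omega.cyl_nonempty p
    have hr' : r.toNode N = p := (Omega.mem_cyl_iff p r).1 hr
    have hrs : r ∈ s := by rw [hT s hs]; simpa [cylUnion, hr'] using hps
    have hru : r ∈ u := by rw [hT u hu]; simpa [cylUnion, hr'] using hpu
    exact Set.disjoint_left.1 (hπ.2.1 hs hu hsu) hrs hru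
  refine ⟨N, hN, ?_⟩
  calc ∑ s ∈ π, ‖μ s‖ ≤ ∑ s ∈ π, ∑ p ∈ T s, ‖amp t p.1‖ := by
        refine sum_le_sum fun s hs => ?_
        rw [congrArg μ (hT s hs), hμ.apply_cylUnion hN]
        exact norm_sum_le _ _
    _ = ∑ p ∈ π.biUnion T, ‖amp t p.1‖ := (sum_biUnion hdisj).symm
    _ ≤ sumNormAmp t N :=
        sum_le_sum_of_subset_of_nonneg (subset_univ _) fun _ _ _ => norm_nonneg _

end IsCSG

section Extension

variable {n : ℕ}

def extendRel (c : Fin n → Fin n → Prop) (I : Finset (Fin n)) (i j : Fin (n + 1)) : Prop :=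
  Fin.lastCases (motive := fun _ => Prop) False
    (fun a => Fin.lastCases (motive := fun _ => Prop) (a ∈ I) (fun b => c a b) j) i

variable {c : Fin n → Fin n → Prop} {I : Finset (Fin n)}

@[simp] lemma extendRel_last_left (j : Fin (n + 1)) : ¬ extendRel c I (Fin.last n) j := by
  simp [extendRel]

@[simp] lemma extendRel_castSucc_last (a : Fin n) :
    extendRel c I a.castSucc (Fin.last n) ↔ a ∈ I := by
  simp [extendRel]

@[simp] lemma extendRel_castSucc_castSucc (a b : Fin n) :
    extendRel c I a.castSucc b.castSucc ↔ c a b := by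
  simp [extendRel]

lemma isNode_extendRel (hc : IsNode c) (hI : isIdeal c I) : IsNode (extendRel c I) := by
  refine ⟨fun i => ?_, fun i j l => ?_, fun i j => ?_⟩
  · cases i using Fin.lastCases <;> simp [hc.1]
  · cases i using Fin.lastCases with
    | last => simp
    | cast a =>
      cases j using Fin.lastCases with
      | last => simp
      | cast b =>
        cases l using Fin.lastCases with
        | last => simpa using fun hab hb => hI b hb a hab
        | cast d => simpa using hc.2.1 a b d
  · cases i using Fin.lastCases with
    | last => simp
    | cast a =>
      cases j using Fin.lastCases with
      | last => simp
      | cast b => simpa using hc.2.2 a b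

lemma pastOf_extendRel_castSucc (a : Fin n) :
    pastOf (extendRel c I) a.castSucc = (pastOf c a).map Fin.castSuccEmb := by
  ext i
  cases i using Fin.lastCases <;> simp [pastOf]

lemma pastOf_extendRel_last : pastOf (extendRel c I) (Fin.last n) = I.map Fin.castSuccEmb := by
  ext i
  cases i using Fin.lastCases <;> simp [pastOf]

lemma maxIn_extendRel_map (S : Finset (Fin n)) :
    maxIn (extendRel c I) (S.map Fin.castSuccEmb) = (maxIn c S).map Fin.castSuccEmb := by
  ext i
  cases i using Fin.lastCases <;> simp [maxIn]

lemma amp_extendRel (t : ℕ → ℂ) (hn : 1 ≤ n) :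
    amp t (extendRel c I) = amp t c * (lam t #I #(maxIn c I) / lam t n 0) := by
  simp only [amp, prod_filter, Fin.prod_univ_castSucc, Fin.val_castSucc, Fin.val_last,
    pastOf_extendRel_castSucc, pastOf_extendRel_last, maxIn_extendRel_map, card_map, if_pos hn]

end Extension

namespace Node

variable {n : ℕ}

def lastPast (q : Node (n + 1)) : Finset (Fin n) :=
  univ.filter fun a => q.1 a.castSucc (Fin.last n)

lemma isIdeal_lastPast (q : Node (n + 1)) : isIdeal (q.restrict n.le_succ).1 q.lastPast := by
  intro j hj i hij
  simp only [lastPast, mem_filter, mem_univ, true_and] at hj ⊢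
  exact q.2.2.1 _ _ _ hij hj

def extendEquiv : (Σ c : Node n, {I // isIdeal c.1 I}) ≃ Node (n + 1) where
  toFun x := ⟨extendRel x.1.1 x.2.1, isNode_extendRel x.1.2 x.2.2⟩
  invFun q := ⟨q.restrict n.le_succ, q.lastPast, q.isIdeal_lastPast⟩
  left_inv x := by
    refine Sigma.subtype_ext (Subtype.ext (funext₂ fun a b => ?_)) (ext fun a => ?_)
    · exact propext (extendRel_castSucc_castSucc a b)
    · simp [lastPast]
  right_inv q := by
    refine Subtype.ext (funext₂ fun i j => propext ?_)
    cases i using Fin.lastCases with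
    | last => simpa using fun h => absurd (q.2.2.2 _ _ h) (not_lt.2 (Fin.le_last j))
    | cast a =>
      cases j using Fin.lastCases with
      | last => simp [lastPast]
      | cast b => exact extendRel_castSucc_castSucc a b

end Node

lemma sumNormAmp_succ (t : ℕ → ℂ) {n : ℕ} (hn : 1 ≤ n) :
    sumNormAmp t (n + 1) = ∑ c : Node n, ‖amp t c.1‖ * (Qval t c.1 / ‖lam t n 0‖) := by
  rw [sumNormAmp, ← Node.extendEquiv.sum_comp, Fintype.sum_sigma]
  refine Fintype.sum_congr _ _ fun c => ?_
  simp only [Node.extendEquiv, Equiv.coe_fn_mk, amp_extendRel t hn, norm_mul, norm_div, Qval,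
    sum_div, mul_sum]
  exact (sum_subtype (univ.filter fun I => isIdeal c.1 I) (by simp)
    fun I => ‖amp t c.1‖ * (‖lam t #I #(maxIn c.1 I)‖ / ‖lam t n 0‖)).symm

lemma lam_add_card_eq_sum_powerset {α : Type*} (t : ℕ → ℂ) (b : ℕ) (X : Finset α) :
    lam t (b + #X) b = ∑ S ∈ X.powerset, t (b + #S) := by
  rw [sum_powerset_apply_card (fun j => t (b + j)), lam, Nat.add_sub_cancel_left]
  refine sum_nbij' (· - b) (b + ·) ?_ ?_ ?_ ?_ ?_
  all_goals intro j hj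
  all_goals simp only [mem_Icc, mem_range] at hj ⊢
  · omega
  · omega
  · omega
  · omega
  · rw [nsmul_eq_mul, Nat.add_sub_cancel' hj.1]

section Ideals

variable {n : ℕ} {c : Fin n → Fin n → Prop}

lemma maxIn_subset (I : Finset (Fin n)) : maxIn c I ⊆ I := filter_subset _ _

lemma exists_mem_maxIn (hc : IsNode c) {I : Finset (Fin n)} {x : Fin n} (hx : x ∈ I) :
    ∃ y ∈ maxIn c I, x = y ∨ c x y := by
  obtain ⟨y, hy, hmax⟩ :=
    (I.filter fun y => x = y ∨ c x y).exists_max_image id ⟨x, mem_filter.2 ⟨hx, .inl rfl⟩⟩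
  rw [mem_filter] at hy
  refine ⟨y, mem_filter.2 ⟨hy.1, fun j hj hyj => ?_⟩, hy.2⟩
  have hxj : x = j ∨ c x j := .inr (hy.2.elim (· ▸ hyj) (hc.2.1 _ _ _ · hyj))
  exact (hmax j (mem_filter.2 ⟨hj, hxj⟩)).not_gt (hc.2.2 _ _ hyj)

lemma mem_iff_exists_mem_maxIn_union (hc : IsNode c) {I S : Finset (Fin n)} (hI : isIdeal c I)
    (hS : S ⊆ I) {x : Fin n} : x ∈ I ↔ ∃ y ∈ maxIn c I ∪ S, x = y ∨ c x y := by
  refine ⟨fun hx => ?_, ?_⟩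
  · obtain ⟨y, hy, hxy⟩ := exists_mem_maxIn hc hx
    exact ⟨y, mem_union_left _ hy, hxy⟩
  · rintro ⟨y, hy, hxy⟩
    have hyI : y ∈ I := union_subset (maxIn_subset I) hS hy
    rcases hxy with rfl | hxy
    · exact hyI
    · exact hI y hyI x hxy

lemma Qval_le (t : ℕ → ℂ) (hc : IsNode c) :
    Qval t c ≤ ∑ j ∈ range (n + 1), (n.choose j : ℝ) * ‖t j‖ := by
  set ideals := univ.filter fun I : Finset (Fin n) => isIdeal c I
  set pairs := ideals.sigma fun I => (I \ maxIn c I).powerset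
  have hinj :
      Set.InjOn (fun x : Σ _ : Finset (Fin n), Finset (Fin n) => maxIn c x.1 ∪ x.2) pairs := by
    rintro ⟨I, S⟩ hIS ⟨I', S'⟩ hIS' (h : maxIn c I ∪ S = maxIn c I' ∪ S')
    simp only [pairs, ideals, coe_sigma, Set.mem_sigma_iff, coe_filter, mem_univ, true_and,
      Set.mem_ofPred_eq, mem_coe, mem_powerset, subset_sdiff] at hIS hIS'
    have hI : I = I' := by
      ext x
      rw [mem_iff_exists_mem_maxIn_union hc hIS.1 hIS.2.1,
        mem_iff_exists_mem_maxIn_union hc hIS'.1 hIS'.2.1, h]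
    subst hI
    rw [← union_sdiff_cancel_left hIS.2.2.symm, h, union_sdiff_cancel_left hIS'.2.2.symm]
  calc Qval t c = ∑ I ∈ ideals, ‖lam t #I #(maxIn c I)‖ := rfl
    _ ≤ ∑ I ∈ ideals, ∑ S ∈ (I \ maxIn c I).powerset, ‖t #(maxIn c I ∪ S)‖ := by
        refine sum_le_sum fun I _ => ?_
        rw [← card_sdiff_add_card_eq_card (maxIn_subset I), add_comm,
          lam_add_card_eq_sum_powerset]
        refine (norm_sum_le _ _).trans_eq (sum_congr rfl fun S hS => ?_)
        rw [card_union_of_disjoint (disjoint_of_subset_right (mem_powerset.1 hS) disjoint_sdiff)]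
    _ = ∑ K ∈ pairs.image fun x => maxIn c x.1 ∪ x.2, ‖t #K‖ := by
        rw [sum_image hinj, sum_sigma]
    _ ≤ ∑ K ∈ (univ : Finset (Fin n)).powerset, ‖t #K‖ :=
        sum_le_sum_of_subset_of_nonneg (fun K _ => mem_powerset.2 (subset_univ K))
          fun _ _ _ => norm_nonneg _
    _ = ∑ j ∈ range (n + 1), (n.choose j : ℝ) * ‖t j‖ := by
        rw [sum_powerset_apply_card (fun j => ‖t j‖), card_univ, Fintype.card_fin]
        simp only [nsmul_eq_mul]

lemma zeta_le_zetaA (t : ℕ → ℂ) (hc : IsNode c) : zeta t c ≤ zetaA t n := by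
  unfold zeta zetaA
  gcongr
  exact Qval_le t hc

end Ideals

lemma zetaA_nonneg {t : ℕ → ℂ} {n : ℕ} (h : lam t n 0 ≠ 0) : 0 ≤ zetaA t n := by
  rw [zetaA, sub_nonneg, one_le_div (norm_pos_iff.2 h), lam_zero_right]
  exact (norm_sum_le _ _).trans_eq (by simp)

lemma sumNormAmp_succ_le (t : ℕ → ℂ) {n : ℕ} (hn : 1 ≤ n) :
    sumNormAmp t (n + 1) ≤ (1 + zetaA t n) * sumNormAmp t n := by
  rw [sumNormAmp_succ t hn, sumNormAmp, mul_sum]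
  refine sum_le_sum fun c _ => ?_
  have hζ := zeta_le_zetaA t c.2
  rw [zeta] at hζ
  rw [mul_comm]
  gcongr
  linarith

instance : Unique (Node 1) where
  default := ⟨fun _ _ => False, fun _ => id, fun _ _ _ h => h.elim, fun _ _ => False.elim⟩
  uniq q := Subtype.ext (funext₂ fun i j => propext
    ⟨fun h => q.2.1 i (Subsingleton.elim j i ▸ h), False.elim⟩)

lemma sumNormAmp_one (t : ℕ → ℂ) : sumNormAmp t 1 = 1 := by
  simp [sumNormAmp, amp]

lemma sumNormAmp_le_exp (t : ℕ → ℂ) {N : ℕ} (hN : 1 ≤ N) :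
    sumNormAmp t N ≤ Real.exp (∑ j ∈ Ico 1 N, zetaA t j) := by
  induction N, hN using Nat.le_induction with
  | base => simp [sumNormAmp_one]
  | succ N hN ih =>
    calc sumNormAmp t (N + 1) ≤ (1 + zetaA t N) * sumNormAmp t N := sumNormAmp_succ_le t hN
      _ ≤ Real.exp (zetaA t N) * Real.exp (∑ j ∈ Ico 1 N, zetaA t j) := by
          refine mul_le_mul ?_ ih (sum_nonneg fun _ _ => norm_nonneg _) (Real.exp_pos _).le
          linarith [Real.add_one_le_exp (zetaA t N)]
      _ = Real.exp (∑ j ∈ Ico 1 (N + 1), zetaA t j) := by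
          rw [sum_Ico_succ_top hN, Real.exp_add, mul_comm]

theorem boundedVariation_of_summable_zetaA {t : ℕ → ℂ} {μ : Set Omega → ℂ} (hμ : IsCSG t μ)
    (hlam : ∀ n, lam t n 0 ≠ 0) (hs : Summable (zetaA t)) : BoundedVariation μ := by
  refine ⟨Real.exp (∑' n, zetaA t n), fun π hπ => ?_⟩
  obtain ⟨N, hN, hle⟩ := hμ.exists_sum_norm_le_sumNormAmp hπ
  refine hle.trans ((sumNormAmp_le_exp t hN).trans (Real.exp_le_exp.2 ?_))
  exact hs.sum_le_tsum _ fun n _ => zetaA_nonneg (hlam n)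

/-- finitely many couplings t_{k_1} = z_1, …, t_{k_m} = z_m with
0 < k_1 < ⋯ < k_m and k_m − k_{m−1} ≥ 2: ζ_n^a has the stated closed form, Σ_{n≥1} ζ_n^a
converges, and the associated ℂSG measure is of bounded variation. -/
theorem statement_13 (m : ℕ) (hm : 2 ≤ m) (k : Fin m → ℕ)
    (hkpos : 0 < k ⟨0, by omega⟩) (hkmono : StrictMono k)
    (hgap : k ⟨m - 2, by omega⟩ + 2 ≤ k ⟨m - 1, by omega⟩)
    (z : Fin m → ℂ) (hz : ∀ i, z i ≠ 0)
    (t : ℕ → ℂ) (ht0 : t 0 = 1) (htk : ∀ i : Fin m, t (k i) = z i)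
    (ht : ∀ j : ℕ, 1 ≤ j → (∀ i : Fin m, j ≠ k i) → t j = 0)
    (hne : ∀ n : ℕ, 1 + ∑ i : Fin m, (n.choose (k i) : ℂ) * z i ≠ 0) :
    (∀ n : ℕ, zetaA t n =
        (1 + ∑ i : Fin m, (n.choose (k i) : ℝ) * ‖(z i)‖) /
          ‖(1 + ∑ i : Fin m, (n.choose (k i) : ℂ) * z i)‖ - 1) ∧
    (∃ L : ℝ, Filter.Tendsto (fun N => ∑ n ∈ Finset.Ico 1 N, zetaA t n)
        Filter.atTop (nhds L)) ∧
    (∀ μ : Set Omega → ℂ, IsCSG t μ → BoundedVariation μ) := by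
  have hk0 (i : Fin m) : k i ≠ 0 := (hkpos.trans_le (hkmono.monotone (Nat.zero_le i.val))).ne'
  have ht' (j : ℕ) (hj : j ≠ 0) : (∀ i, j ≠ k i) → t j = 0 := ht j (Nat.one_le_iff_ne_zero.2 hj)
  have hlam (n : ℕ) : lam t n 0 = 1 + ∑ i, (n.choose (k i) : ℂ) * z i := by
    simp [lam_zero_right, sum_range_choose_mul_of_support hk0 hkmono.injective ht', ht0, htk]
  have hclosed (n : ℕ) : zetaA t n = (1 + ∑ i, (n.choose (k i) : ℝ) * ‖z i‖) /
      ‖1 + ∑ i, (n.choose (k i) : ℂ) * z i‖ - 1 := by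
    rw [zetaA, hlam, sum_range_choose_mul_of_support (s := fun j => ‖t j‖) hk0
      hkmono.injective fun j hj hjk => by simp [ht' j hj hjk]]
    simp [ht0, htk]
  have hlam_ne (n : ℕ) : lam t n 0 ≠ 0 := hlam n ▸ hne n
  obtain ⟨C, hC⟩ := exists_ratio_sub_one_le_div_sq (k := k) (T := ⟨m - 1, by omega⟩) (hz _)
    (fun i hi => hkmono.monotone (show (i : ℕ) ≤ m - 2 by
      have : (i : ℕ) ≠ m - 1 := fun h => hi (Fin.ext h)
      omega)) hgap
  have hs : Summable (zetaA t) := by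
    refine .of_norm_bounded_eventually_nat
      ((Real.summable_one_div_nat_pow.2 one_lt_two).mul_left C) (hC.mono fun n hn => ?_)
    rw [Real.norm_of_nonneg (zetaA_nonneg (hlam_ne n)), hclosed, mul_one_div]
    exact hn
  refine ⟨hclosed, ⟨∑' n, zetaA t n - zetaA t 0, ?_⟩,
    fun μ hμ => boundedVariation_of_summable_zetaA hμ hlam_ne hs⟩
  refine (hs.hasSum.tendsto_sum_nat.sub_const _).congr' ?_
  filter_upwards [eventually_ge_atTop 1] with N hN
  rw [sum_Ico_eq_sub _ hN, sum_range_one]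

end
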